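/- Differential variant with closed domain constraint (dV≥&): Let f be globally Lipschitz, p polynomial, Q ⊆ ℝⁿ closed, ε > 0. Let φ be the solution from x₀ with p(x₀) < 0, and assume (i) for all t, if p(φ(s)) < 0 for all s ∈ [0,t] then φ(t) ∈ Q; and (ii) ∇p(y)·f(y) ≥ ε for all y ∈ Q with p(y) < 0. Then there exists τ with p(φ(τ)) ≥ 0 and φ(s) ∈ Q for all s ∈ [0,τ]. -/

import Mathlib

/-!
Along the solution, `g t = p (φ t)` has derivative `∇p(φ t) · f(φ t)`, which is at least `ε` as long
as `g` has been negative on `[0, t]`, since then `φ t ∈ Q`. Hence `g` cannot stay negative: it would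
grow at least at rate `ε`. The set `{g ≥ 0}` is closed, so there is a first time `τ > 0` at which
`g τ ≥ 0`; on `[0, τ)` the solution lies in `Q` by the domain hypothesis, and at `τ` because `Q` is
closed and `φ` is continuous.
-/

open MvPolynomial Set

theorem MvPolynomial.hasDerivAt_eval_comp {σ : Type*} [Fintype σ] (p : MvPolynomial σ ℝ)
    {φ : ℝ → σ → ℝ} {φ' : σ → ℝ} {t : ℝ} (hφ : HasDerivAt φ φ' t) :
    HasDerivAt (fun s => eval (φ s) p) (∑ i, eval (φ t) (pderiv i p) * φ' i) t := by
  classical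
  induction p using MvPolynomial.induction_on with
  | C a => simpa using hasDerivAt_const t a
  | add q r hq hr =>
    simp only [map_add, add_mul, Finset.sum_add_distrib]
    exact hq.add hr
  | mul_X q i hq =>
    simp only [map_mul, eval_X]
    refine (hq.fun_mul (hasDerivAt_pi.1 hφ i)).congr_deriv ?_
    simp only [Derivation.leibniz, pderiv_X, Pi.single_apply, smul_eq_mul, map_add, map_mul,
      eval_X, apply_ite, map_zero, add_mul, Finset.sum_add_distrib, Finset.sum_mul,
      ite_mul, mul_one, zero_mul, mul_zero, Finset.sum_ite_eq, Finset.mem_univ, if_true]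
    rw [add_comm]
    exact congrArg₂ _ rfl (Finset.sum_congr rfl fun _ _ => by ring)

theorem exists_nonneg_of_le_deriv_while_neg {g g' : ℝ → ℝ} {ε : ℝ} (hε : 0 < ε)
    (hg : ∀ t, 0 ≤ t → HasDerivAt g (g' t) t)
    (hg' : ∀ t, 0 ≤ t → (∀ s ∈ Icc 0 t, g s < 0) → ε ≤ g' t) :
    ∃ t, 0 ≤ t ∧ 0 ≤ g t := by
  by_contra! hneg
  have hgrowth := (convex_Ici (0 : ℝ)).mul_sub_le_image_sub_of_le_deriv
    (fun t ht => (hg t ht).continuousAt.continuousWithinAt)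
    (fun t ht => (hg t (interior_subset ht)).differentiableAt.differentiableWithinAt)
    (C := ε) fun t ht => by
      rw [interior_Ici] at ht
      rw [(hg t ht.le).deriv]
      exact hg' t ht.le fun s hs => hneg s hs.1
  have hT : 0 ≤ -g 0 / ε := div_nonneg (neg_nonneg.2 (hneg 0 le_rfl).le) hε.le
  have hgT := hgrowth 0 self_mem_Ici _ hT hT
  rw [sub_zero, mul_div_cancel₀ _ hε.ne'] at hgT
  linarith [hneg _ hT]

theorem exists_first_nonneg {g : ℝ → ℝ} {a b : ℝ} (hab : a ≤ b) (hg : ContinuousOn g (Icc a b))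
    (ha : g a < 0) (hb : 0 ≤ g b) : ∃ τ, a < τ ∧ 0 ≤ g τ ∧ ∀ s ∈ Ico a τ, g s < 0 := by
  have hS : IsCompact (Icc a b ∩ g ⁻¹' Ici 0) :=
    isCompact_Icc.of_isClosed_subset (hg.preimage_isClosed_of_isClosed isClosed_Icc isClosed_Ici)
      inter_subset_left
  obtain ⟨τ, ⟨hτ, hgτ⟩, hleast⟩ := hS.exists_isLeast ⟨b, ⟨hab, le_rfl⟩, hb⟩
  refine ⟨τ, hτ.1.lt_of_ne ?_, hgτ, fun s hs => ?_⟩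
  · rintro rfl; exact (not_le.2 ha) hgτ
  · by_contra! hs'
    exact (hleast ⟨⟨hs.1, hs.2.le.trans hτ.2⟩, hs'⟩).not_gt hs.2

theorem dV_ge_domain_general (n : ℕ) (f : (Fin n → ℝ) → (Fin n → ℝ)) (p : MvPolynomial (Fin n) ℝ)
    (Q : Set (Fin n → ℝ)) (hQ : IsClosed Q) (ε : ℝ) (hε : 0 < ε)
    (φ : ℝ → (Fin n → ℝ)) (hsol : ∀ t : ℝ, 0 ≤ t → HasDerivAt φ (f (φ t)) t)
    (hx₀ : eval (φ 0) p < 0)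
    (hdom : ∀ t : ℝ, 0 ≤ t → (∀ s ∈ Set.Icc (0:ℝ) t, eval (φ s) p < 0) → φ t ∈ Q)
    (hlie : ∀ y ∈ Q, eval y p < 0 →
      ε ≤ ∑ i : Fin n, eval y (pderiv i p) * f y i) :
    ∃ τ : ℝ, 0 ≤ τ ∧ 0 ≤ eval (φ τ) p ∧ ∀ s ∈ Set.Icc (0:ℝ) τ, φ s ∈ Q := by
  have hp : ∀ t, 0 ≤ t → HasDerivAt (fun s => eval (φ s) p)
      (∑ i, eval (φ t) (pderiv i p) * f (φ t) i) t :=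
    fun t ht => p.hasDerivAt_eval_comp (hsol t ht)
  obtain ⟨t, ht, hpt⟩ := exists_nonneg_of_le_deriv_while_neg hε hp
    fun t ht hneg => hlie _ (hdom t ht hneg) (hneg t ⟨ht, le_rfl⟩)
  obtain ⟨τ, hτ, hpτ, hbefore⟩ := exists_first_nonneg ht
    (fun s hs => (hp s hs.1).continuousAt.continuousWithinAt) hx₀ hpt
  refine ⟨τ, hτ.le, hpτ, ?_⟩
  have hQ_Ico : MapsTo φ (Ico 0 τ) Q := fun s hs =>
    hdom s hs.1 fun u hu => hbefore u ⟨hu.1, hu.2.trans_lt hs.2⟩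
  have hφ_cont : ContinuousOn φ (Icc 0 τ) := fun s hs =>
    (hsol s hs.1).continuousAt.continuousWithinAt
  rw [← closure_Ico hτ.ne] at hφ_cont ⊢
  exact hQ.closure_eq ▸ hQ_Ico.closure_of_continuousOn hφ_cont

/-- Differential variant with closed domain constraint dV≥&: with `f` globally
Lipschitz, `Q` closed, `p(x₀) < 0`, if the solution stays in `Q` while `p < 0`
and the Lie derivative of `p` is at least `ε > 0` on `Q ∩ {p < 0}`, then the
solution reaches `{p ≥ 0}` while staying in `Q` the whole time. -/
theorem dV_ge_domain (n : ℕ) (f : (Fin n → ℝ) → (Fin n → ℝ)) (K : NNReal)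
    (hf : LipschitzWith K f) (p : MvPolynomial (Fin n) ℝ)
    (Q : Set (Fin n → ℝ)) (hQ : IsClosed Q) (ε : ℝ) (hε : 0 < ε)
    (φ : ℝ → (Fin n → ℝ)) (hsol : ∀ t : ℝ, 0 ≤ t → HasDerivAt φ (f (φ t)) t)
    (hx₀ : eval (φ 0) p < 0)
    (hdom : ∀ t : ℝ, 0 ≤ t → (∀ s ∈ Set.Icc (0:ℝ) t, eval (φ s) p < 0) → φ t ∈ Q)
    (hlie : ∀ y ∈ Q, eval y p < 0 →
      ε ≤ ∑ i : Fin n, eval y (pderiv i p) * f y i) :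
    ∃ τ : ℝ, 0 ≤ τ ∧ 0 ≤ eval (φ τ) p ∧ ∀ s ∈ Set.Icc (0:ℝ) τ, φ s ∈ Q :=
  dV_ge_domain_general n f p Q hQ ε hε φ hsol hx₀ hdom hlie
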